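/- arXiv:2507.22528 — 3 statements merged into one kernel-verified Lean document; each statement's English description precedes it below -/
import Mathlib

section
/- The stacked matrix Ã obtained from the staircase matrix A by appending the all-ones row e^T, its negation -e^T, and the negated identity -I_d, is totally unimodular. -/
open Matrix


namespace StackedHookAux

/-- A "good part": zero or a standard basis vector. -/
def GoodPart {p : ℕ} (x : Fin p → ℤ) : Prop := x = 0 ∨ ∃ j, x = Pi.single j 1

/-- A "good row": difference of two good parts. -/
def GoodRow {p : ℕ} (v : Fin p → ℤ) : Prop :=
  ∃ x y : Fin p → ℤ, GoodPart x ∧ GoodPart y ∧ v = x - y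

/-- A signed interval row. -/
def IntRow {p : ℕ} (v : Fin p → ℤ) : Prop :=
  ∃ (s : ℤ) (a b : ℕ), (s = 1 ∨ s = -1) ∧
    v = fun c : Fin p => if a ≤ (c : ℕ) ∧ (c : ℕ) ≤ b then s else 0

lemma GoodPart.comp_succAbove {p : ℕ} {x : Fin (p + 1) → ℤ} (hx : GoodPart x)
    (j0 : Fin (p + 1)) : GoodPart (x ∘ j0.succAbove) := by
  rcases hx with rfl | ⟨j, rfl⟩
  · exact Or.inl rfl
  · by_cases hj : j = j0
    · subst hj
      left
      funext c
      simp [Pi.single_apply, (Fin.succAbove_ne j c).symm]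
    · obtain ⟨j', hj'⟩ := Fin.exists_succAbove_eq (show j ≠ j0 from hj)
      right
      refine ⟨j', funext fun c => ?_⟩
      simp only [Function.comp_apply, Pi.single_apply]
      rw [← hj']
      congr 1
      simp [Fin.succAbove_right_injective.eq_iff]

lemma goodPart_sum {p : ℕ} {x : Fin p → ℤ} (hx : GoodPart x) :
    (∑ c, x c) = 0 ∨ (∑ c, x c) = 1 := by
  rcases hx with rfl | ⟨j, rfl⟩
  · left; simp
  · right; simp [Finset.sum_pi_single']

lemma neg_mem_range {x : ℤ} (h : -x ∈ Set.range SignType.cast) :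
    x ∈ Set.range SignType.cast := by
  obtain ⟨s, hs⟩ := h
  refine ⟨-s, ?_⟩
  cases s <;> simp_all

lemma good_det : ∀ (p : ℕ) (M : Matrix (Fin p) (Fin p) ℤ), (∀ i, GoodRow (M i)) →
    M.det ∈ Set.range SignType.cast := by
  intro p
  induction p with
  | zero => exact fun M _ => ⟨1, by simp [Matrix.det_fin_zero]⟩
  | succ p ih =>
    intro M hM
    by_cases hrow : ∀ i, (∑ c, M i c) = 0
    · refine ⟨0, ?_⟩
      have h0 : M.mulVec (fun _ => (1 : ℤ)) = 0 := by
        funext i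
        simpa [Matrix.mulVec, dotProduct] using hrow i
      have := (Matrix.exists_mulVec_eq_zero_iff (M := M)).mp
        ⟨fun _ => (1 : ℤ), by intro h; exact one_ne_zero (congrFun h 0), h0⟩
      simp [this]
    · push_neg at hrow
      obtain ⟨i, hi⟩ := hrow
      obtain ⟨x, y, hx, hy, hxy⟩ := hM i
      -- row i is a ± basis vector
      obtain ⟨j0, s, hs, hMi⟩ :
          ∃ (j0 : Fin (p + 1)) (s : ℤ), (s = 1 ∨ s = -1) ∧ M i = Pi.single j0 s := by
        have hsum : (∑ c, M i c) = (∑ c, x c) - (∑ c, y c) := by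
          rw [hxy]; simp [Finset.sum_sub_distrib]
        rcases hx with rfl | ⟨j, rfl⟩
        · rcases hy with rfl | ⟨j, rfl⟩
          · exfalso; apply hi; simp [hxy]
          · refine ⟨j, -1, Or.inr rfl, ?_⟩
            rw [hxy]
            funext c
            simp [Pi.single_apply, apply_ite]
        · rcases hy with rfl | ⟨j', rfl⟩
          · exact ⟨j, 1, Or.inl rfl, by rw [hxy]; funext c; simp⟩
          · exfalso
            apply hi
            rw [hsum]
            rcases goodPart_sum (Or.inr ⟨j, rfl⟩ : GoodPart (Pi.single j (1:ℤ))) with h | h <;>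
            rcases goodPart_sum (Or.inr ⟨j', rfl⟩ : GoodPart (Pi.single j' (1:ℤ))) with h' | h' <;>
              simp_all [Finset.sum_pi_single']
      rw [Matrix.det_succ_row M i]
      rw [Fintype.sum_eq_single j0 (fun b hb => by
        have : M i b = 0 := by rw [hMi]; exact Pi.single_eq_of_ne hb _
        simp [this])]
      have hminor : ∀ r, GoodRow ((M.submatrix i.succAbove j0.succAbove) r) := by
        intro r
        obtain ⟨x', y', hx', hy', hxy'⟩ := hM (i.succAbove r)
        refine ⟨x' ∘ j0.succAbove, y' ∘ j0.succAbove,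
          hx'.comp_succAbove j0, hy'.comp_succAbove j0, ?_⟩
        funext c
        simp [Matrix.submatrix_apply, hxy']
      change _ ∈ MonoidHom.mrange SignType.castHom.toMonoidHom
      refine mul_mem (mul_mem ?_ ?_) (ih _ hminor)
      · apply pow_mem
        exact ⟨-1, by simp⟩
      rcases hs with rfl | rfl
      · exact ⟨1, by simp [hMi]⟩
      · exact ⟨-1, by simp [hMi]⟩

end StackedHookAux
namespace StackedHookAux2

/-- Upper unitriangular difference matrix. -/
def Dm (p : ℕ) : Matrix (Fin p) (Fin p) ℤ :=
  Matrix.of fun j c => if j = c then 1 else if (j : ℕ) + 1 = (c : ℕ) then -1 else 0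

lemma Dm_det (p : ℕ) : (Dm p).det = 1 := by
  rw [Matrix.det_of_upperTriangular]
  · simp [Dm]
  · intro i j h
    have : (j : ℕ) < (i : ℕ) := h
    simp only [Dm, Matrix.of_apply]
    rw [if_neg (by intro hij; subst hij; omega), if_neg (by omega)]

lemma mul_Dm_apply {p : ℕ} (N : Matrix (Fin p) (Fin p) ℤ) (r c : Fin p) :
    (N * Dm p) r c = N r c -
      (if h : (c : ℕ) = 0 then 0 else N r ⟨(c : ℕ) - 1, lt_of_le_of_lt (Nat.sub_le _ _) c.isLt⟩) := by
  rw [Matrix.mul_apply]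
  have hsplit : ∀ j : Fin p, N r j * Dm p j c =
      (if j = c then N r j else 0) - (if (j : ℕ) + 1 = (c : ℕ) then N r j else 0) := by
    intro j
    simp only [Dm, Matrix.of_apply]
    split_ifs with h1 h2 h2
    · exfalso; subst h1; omega
    · ring
    · ring
    · ring
  simp_rw [hsplit]
  rw [Finset.sum_sub_distrib]
  congr 1
  · simp
  · by_cases hc : (c : ℕ) = 0
    · rw [dif_pos hc]
      apply Finset.sum_eq_zero
      intro j _
      rw [if_neg (by omega)]
    · rw [dif_neg hc]
      rw [Finset.sum_eq_single_of_mem (⟨(c : ℕ) - 1, lt_of_le_of_lt (Nat.sub_le _ _) c.isLt⟩ : Fin p)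
        (Finset.mem_univ _) (fun b _ hb => by
          rw [if_neg]
          intro hbc
          apply hb
          apply Fin.ext
          simp only []
          omega)]
      rw [if_pos (by simp; omega)]

end StackedHookAux2

namespace StackedHookAux3
open StackedHookAux StackedHookAux2

lemma introw_det {p : ℕ} (N : Matrix (Fin p) (Fin p) ℤ) (hN : ∀ i, IntRow (N i)) :
    N.det ∈ Set.range SignType.cast := by
  have h1 : N.det = (N * Dm p).det := by rw [Matrix.det_mul, Dm_det, mul_one]
  rw [h1]
  apply good_det
  intro r
  obtain ⟨s, a, b, hs, hv⟩ := hN r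
  have hvc : ∀ c : Fin p, N r c = if a ≤ (c : ℕ) ∧ (c : ℕ) ≤ b then s else 0 := by
    intro c; rw [hv]
  by_cases hab : a ≤ b ∧ a < p
  · -- nonempty interval
    have key : ∀ c : Fin p, (N * Dm p) r c =
        s * ((if (c : ℕ) = a then 1 else 0) - (if (c : ℕ) = b + 1 then 1 else 0)) := by
      intro c
      rw [mul_Dm_apply, hvc c]
      by_cases hc : (c : ℕ) = 0
      · rw [dif_pos hc]
        split_ifs <;> first | ring1 | (exfalso; omega)
      · rw [dif_neg hc]
        have hlt : (c : ℕ) - 1 < p := lt_of_le_of_lt (Nat.sub_le _ _) c.isLt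
        have hcv : ((⟨(c : ℕ) - 1, hlt⟩ : Fin p) : ℕ) = (c : ℕ) - 1 := rfl
        rw [hvc ⟨(c : ℕ) - 1, hlt⟩, hcv]
        clear hcv hlt
        split_ifs <;> first | ring1 | (exfalso; omega)
    set u : Fin p → ℤ := fun c => if (c : ℕ) = a then 1 else 0 with hu'
    set w : Fin p → ℤ := fun c => if (c : ℕ) = b + 1 then 1 else 0 with hw'
    have hu : GoodPart u := by
      right
      refine ⟨⟨a, hab.2⟩, funext fun c => ?_⟩
      simp [hu', Pi.single_apply, Fin.ext_iff]
    have hw : GoodPart w := by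
      by_cases hb : b + 1 < p
      · right
        refine ⟨⟨b + 1, hb⟩, funext fun c => ?_⟩
        simp [hw', Pi.single_apply, Fin.ext_iff]
      · left
        funext c
        simp only [hw', Pi.zero_apply]
        rw [if_neg (by omega)]
    rcases hs with rfl | rfl
    · refine ⟨u, w, hu, hw, funext fun c => ?_⟩
      simp only [Pi.sub_apply]
      rw [key c]; ring
    · refine ⟨w, u, hw, hu, funext fun c => ?_⟩
      simp only [Pi.sub_apply]
      rw [key c]; ring
  · -- empty interval: row is zero
    refine ⟨0, 0, Or.inl rfl, Or.inl rfl, funext fun c => ?_⟩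
    rw [mul_Dm_apply]
    have h0 : ∀ c' : Fin p, N r c' = 0 := by
      intro c'
      rw [hvc, if_neg (by omega)]
    rw [h0]
    by_cases hc : (c : ℕ) = 0
    · rw [dif_pos hc]; simp
    · rw [dif_neg hc, h0]; simp

lemma intRow_comp_strictMono {n p : ℕ} {v : Fin n → ℤ} (hv : IntRow v)
    {g : Fin p → Fin n} (hg : StrictMono g) : IntRow (v ∘ g) := by
  classical
  obtain ⟨s, a, b, hs, rfl⟩ := hv
  set S : Finset (Fin p) := Finset.univ.filter (fun c => a ≤ (g c : ℕ) ∧ (g c : ℕ) ≤ b) with hS'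
  have hmem : ∀ c : Fin p, c ∈ S ↔ (a ≤ (g c : ℕ) ∧ (g c : ℕ) ≤ b) := by
    intro c; simp [hS']
  by_cases hS : S.Nonempty
  · refine ⟨s, (S.min' hS : ℕ), (S.max' hS : ℕ), hs, funext fun c => ?_⟩
    simp only [Function.comp_apply]
    have hmin := (hmem _).mp (S.min'_mem hS)
    have hmax := (hmem _).mp (S.max'_mem hS)
    by_cases hc : a ≤ (g c : ℕ) ∧ (g c : ℕ) ≤ b
    · rw [if_pos hc, if_pos ?_]
      constructor
      · exact S.min'_le c ((hmem c).mpr hc)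
      · exact S.le_max' c ((hmem c).mpr hc)
    · rw [if_neg hc, if_neg ?_]
      rintro ⟨h1, h2⟩
      have hgc1 : g (S.min' hS) ≤ g c := hg.monotone h1
      have hgc2 : g c ≤ g (S.max' hS) := hg.monotone h2
      exact hc ⟨le_trans hmin.1 hgc1, le_trans hgc2 hmax.2⟩
  · refine ⟨s, 1, 0, hs, funext fun c => ?_⟩
    simp only [Function.comp_apply]
    rw [if_neg (fun hc => hS ⟨c, (hmem c).mpr hc⟩), if_neg (by omega)]

lemma intRow_tu {m : Type*} {n : ℕ} (M : Matrix m (Fin n) ℤ) (hM : ∀ i, IntRow (M i)) :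
    M.IsTotallyUnimodular := by
  intro p f g hf hg
  set σ := Tuple.sort g with hσ
  have hmono : StrictMono (g ∘ σ) :=
    (Tuple.monotone_sort g).strictMono_of_injective (hg.comp σ.injective)
  have key : (M.submatrix f (g ∘ σ)).det ∈ Set.range SignType.cast := by
    apply introw_det
    intro i
    exact intRow_comp_strictMono (hM (f i)) hmono
  have hsub : M.submatrix f (g ∘ ⇑σ) = (M.submatrix f g).submatrix id ⇑σ := rfl
  rw [hsub, Matrix.det_permute'] at key
  rcases Int.units_eq_one_or (Equiv.Perm.sign σ) with h | h <;> rw [h] at key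
  · simpa using key
  · apply neg_mem_range
    simpa using key

end StackedHookAux3

/-- The stacked matrix `Ã`, obtained from the `(k+ℓ) × (k+ℓ)` staircase matrix `A` of
initial-segment indicator rows by appending the all-ones row `eᵀ`, its negation `-eᵀ`,
and the negated identity `-I_d` (`d = k + ℓ`), is totally unimodular. -/
theorem stacked_hook_matrix_isTotallyUnimodular (k l : ℕ) (hk : 1 ≤ k) (hl : 1 ≤ l) :
    let A : Matrix (Fin (k + l)) (Fin (k + l)) ℤ :=
      Matrix.of fun r c =>
        if (c : ℕ) ≤ (r : ℕ) ∧ ((r : ℕ) < k ∨ k ≤ (c : ℕ)) then 1 else 0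
    let Atilde : Matrix (Fin (k + l) ⊕ (Fin 2 ⊕ Fin (k + l))) (Fin (k + l)) ℤ :=
      Matrix.of (Sum.elim (fun r c => A r c)
        (Sum.elim (fun t c => if t = 0 then 1 else -1)
          (fun i c => if i = c then -1 else 0)))
    Atilde.IsTotallyUnimodular := by
  intro A Atilde
  apply StackedHookAux3.intRow_tu
  rintro (r | t | i)
  · -- staircase rows
    by_cases hr : (r : ℕ) < k
    · refine ⟨1, 0, (r : ℕ), Or.inl rfl, funext fun c => ?_⟩
      show (if (c : ℕ) ≤ (r : ℕ) ∧ ((r : ℕ) < k ∨ k ≤ (c : ℕ)) then (1 : ℤ) else 0) = _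
      split_ifs <;> omega
    · refine ⟨1, k, (r : ℕ), Or.inl rfl, funext fun c => ?_⟩
      show (if (c : ℕ) ≤ (r : ℕ) ∧ ((r : ℕ) < k ∨ k ≤ (c : ℕ)) then (1 : ℤ) else 0) = _
      split_ifs <;> omega
  · -- the rows eᵀ and -eᵀ
    by_cases ht : t = 0
    · refine ⟨1, 0, k + l, Or.inl rfl, funext fun c => ?_⟩
      show (if t = 0 then (1 : ℤ) else -1) = _
      rw [if_pos ht, if_pos ⟨Nat.zero_le _, c.isLt.le⟩]
    · refine ⟨-1, 0, k + l, Or.inr rfl, funext fun c => ?_⟩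
      show (if t = 0 then (1 : ℤ) else -1) = _
      rw [if_neg ht, if_pos ⟨Nat.zero_le _, c.isLt.le⟩]
  · -- the rows of -I
    refine ⟨-1, (i : ℕ), (i : ℕ), Or.inr rfl, funext fun c => ?_⟩
    show (if i = c then (-1 : ℤ) else 0) = _
    simp only [Fin.ext_iff]
    split_ifs <;> omega
end

section
/- The polyhedron H = {u ∈ R^{k+ℓ} : Σ_{i≤r} u_i ≤ L_r (1 ≤ r ≤ k), Σ_{j≤s} u_{k+j} ≤ C_s (1 ≤ s ≤ ℓ), Σ_i u_i = |λ|, u ≥ 0} is an integral polyhedron, i.e., H equals the convex hull of its integer points. -/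
/-!
Order the coordinates as `u_0, …, u_{k-1}, u_{k+l-1}, …, u_k` and let `y_0, …, y_{k+l}` be the
partial sums of `u` in this order. Then `u ∈ H` iff `y` is monotone (that is `u ≥ 0`) with every
`y_m` confined to an interval with integer endpoints: `y_0 = 0`, `y_{k+l} = |λ|`, `y_r ≤ L_r` and
`y_{k+l-s} ≥ |λ| - C_s`. As `u` is the vector of consecutive differences of `y`, a change of
variables preserving lattice points, it suffices that such a set of monotone vectors is integral.
If `y` has fractional coordinates, shift all of them by a common `t`: as long as every shifted
coordinate stays between its floor and ceiling, monotonicity and the bounds survive. The two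
extreme shifts each make one more coordinate integral, and `y` lies on the segment between them,
so induction on the number of fractional coordinates finishes the proof.
-/

open Finset Set

section FractionalSupport

variable {ι : Type*}

noncomputable def fractSupport [Fintype ι] (y : ι → ℝ) : Finset ι := {i | Int.fract (y i) ≠ 0}

noncomputable def fractShift (y : ι → ℝ) (t : ℝ) : ι → ℝ :=
  y + t • fun i => if Int.fract (y i) = 0 then 0 else 1

lemma fractShift_apply_of_fract_eq_zero {y : ι → ℝ} {i : ι} (t : ℝ) (h : Int.fract (y i) = 0) :
    fractShift y t i = y i := by
  simp [fractShift, h]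

lemma fractShift_apply_of_fract_ne_zero {y : ι → ℝ} {i : ι} (t : ℝ) (h : Int.fract (y i) ≠ 0) :
    fractShift y t i = y i + t := by
  simp [fractShift, h]

variable [Fintype ι]

lemma mem_fractSupport {y : ι → ℝ} {i : ι} : i ∈ fractSupport y ↔ Int.fract (y i) ≠ 0 := by
  simp [fractSupport]

theorem subset_convexHull_of_exists_segment {S : Set (ι → ℝ)}
    (h : ∀ y ∈ S, (fractSupport y).Nonempty → ∃ a ∈ S, ∃ b ∈ S,
      y ∈ segment ℝ a b ∧ fractSupport a ⊂ fractSupport y ∧ fractSupport b ⊂ fractSupport y) :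
    S ⊆ convexHull ℝ {y ∈ S | ∀ i, ∃ z : ℤ, y i = z} := by
  suffices ∀ n, ∀ y ∈ S, #(fractSupport y) = n →
      y ∈ convexHull ℝ {y ∈ S | ∀ i, ∃ z : ℤ, y i = z} from fun y hy => this _ y hy rfl
  intro n
  induction n using Nat.strong_induction_on with
  | _ n ih =>
    intro y hy hn
    rcases (fractSupport y).eq_empty_or_nonempty with hempty | hne
    · refine subset_convexHull ℝ _ ⟨hy, fun i => ?_⟩
      have hi : Int.fract (y i) = 0 :=
        not_not.1 <| mem_fractSupport.not.1 (hempty ▸ notMem_empty i)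
      obtain ⟨z, hz⟩ := Int.fract_eq_zero_iff.1 hi
      exact ⟨z, hz.symm⟩
    · obtain ⟨a, ha, b, hb, hy_ab, ha_lt, hb_lt⟩ := h y hy hne
      exact (convex_convexHull ℝ _).segment_subset
        (ih _ (hn ▸ card_lt_card ha_lt) a ha rfl) (ih _ (hn ▸ card_lt_card hb_lt) b hb rfl) hy_ab

lemma fractSupport_fractShift_ssubset {y : ι → ℝ} {t : ℝ} {i : ι} (hi : i ∈ fractSupport y)
    (hti : Int.fract (y i + t) = 0) :
    fractSupport (fractShift y t) ⊂ fractSupport y := by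
  refine (Finset.ssubset_iff_of_subset fun j hj => ?_).2 ⟨i, hi, ?_⟩
  · rw [mem_fractSupport] at hj ⊢
    exact fun hj0 => hj (by rw [fractShift_apply_of_fract_eq_zero t hj0, hj0])
  · rw [mem_fractSupport, not_not, fractShift_apply_of_fract_ne_zero t (mem_fractSupport.1 hi),
      hti]

end FractionalSupport

lemma mem_segment_add_smul {E : Type*} [AddCommGroup E] [Module ℝ E] (x v : E) {s t : ℝ}
    (hs : s < 0) (ht : 0 < t) : x ∈ segment ℝ (x + s • v) (x + t • v) := by
  have hts : 0 < t - s := by linarith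
  refine ⟨t / (t - s), -s / (t - s), by positivity, div_nonneg (by linarith) hts.le,
    by field_simp; ring, ?_⟩
  rw [smul_add, smul_add, smul_smul, smul_smul, add_add_add_comm, ← add_smul, ← add_smul,
    show t / (t - s) + -s / (t - s) = 1 by field_simp; ring,
    show t / (t - s) * s + -s / (t - s) * t = 0 by field_simp; ring, one_smul, zero_smul, add_zero]

section MonotoneInterPi

variable {ι : Type*} [Preorder ι]

lemma convex_setOf_monotone : Convex ℝ {y : ι → ℝ | Monotone y} := by
  intro x hx y hy a b ha hb _ i j hij
  simp only [Pi.add_apply, Pi.smul_apply, smul_eq_mul]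
  exact add_le_add (mul_le_mul_of_nonneg_left (hx hij) ha) (mul_le_mul_of_nonneg_left (hy hij) hb)

variable {I : ι → Set ℝ}

lemma fractShift_mem_monotone_inter_pi (hI : ∀ m, ∀ x ∈ I m, Icc (⌊x⌋ : ℝ) ⌈x⌉ ⊆ I m)
    {y : ι → ℝ} (hy : y ∈ {y | Monotone y} ∩ univ.pi I) {t : ℝ}
    (ht : ∀ m, Int.fract (y m) ≠ 0 → y m + t ∈ Icc (⌊y m⌋ : ℝ) ⌈y m⌉) :
    fractShift y t ∈ {y | Monotone y} ∩ univ.pi I := by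
  have hz : ∀ m, fractShift y t m ∈ Icc (⌊y m⌋ : ℝ) ⌈y m⌉ := fun m => by
    by_cases hm : Int.fract (y m) = 0
    · rw [fractShift_apply_of_fract_eq_zero t hm]; exact ⟨Int.floor_le _, Int.le_ceil _⟩
    · rw [fractShift_apply_of_fract_ne_zero t hm]; exact ht m hm
  refine ⟨fun i j hij => ?_, fun m _ => hI m (y m) (hy.2 m trivial) (hz m)⟩
  have hyij := hy.1 hij
  by_cases hi : Int.fract (y i) = 0
  · obtain ⟨a, ha⟩ := Int.fract_eq_zero_iff.1 hi
    calc fractShift y t i = a := by rw [fractShift_apply_of_fract_eq_zero t hi, ha]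
      _ ≤ ⌊y j⌋ := by exact_mod_cast Int.le_floor.2 (ha ▸ hyij)
      _ ≤ _ := (hz j).1
  by_cases hj : Int.fract (y j) = 0
  · obtain ⟨b, hb⟩ := Int.fract_eq_zero_iff.1 hj
    calc fractShift y t i ≤ ⌈y i⌉ := (hz i).2
      _ ≤ b := by exact_mod_cast Int.ceil_le.2 (hb ▸ hyij)
      _ = _ := by rw [fractShift_apply_of_fract_eq_zero t hj, hb]
  · rw [fractShift_apply_of_fract_ne_zero t hi, fractShift_apply_of_fract_ne_zero t hj]
    linarith

theorem monotone_inter_pi_subset_convexHull [Fintype ι]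
    (hI : ∀ m, ∀ x ∈ I m, Icc (⌊x⌋ : ℝ) ⌈x⌉ ⊆ I m) :
    {y : ι → ℝ | Monotone y} ∩ univ.pi I ⊆
      convexHull ℝ {y ∈ {y : ι → ℝ | Monotone y} ∩ univ.pi I | ∀ i, ∃ z : ℤ, y i = z} := by
  refine subset_convexHull_of_exists_segment fun y hy hne => ?_
  obtain ⟨m₀, hm₀, hmin₀⟩ := exists_min_image (fractSupport y) (fun m => Int.fract (y m)) hne
  obtain ⟨m₁, hm₁, hmin₁⟩ := exists_min_image (fractSupport y) (fun m => 1 - Int.fract (y m)) hne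
  have hθ : 0 < Int.fract (y m₀) := (Int.fract_nonneg _).lt_of_ne' (mem_fractSupport.1 hm₀)
  have hμ : 0 < 1 - Int.fract (y m₁) := sub_pos.2 (Int.fract_lt_one _)
  refine ⟨_, fractShift_mem_monotone_inter_pi hI hy (t := -Int.fract (y m₀))
      fun m hm => ⟨?_, ?_⟩,
    _, fractShift_mem_monotone_inter_pi hI hy (t := 1 - Int.fract (y m₁))
      fun m hm => ⟨?_, ?_⟩,
    mem_segment_add_smul y _ (neg_neg_of_pos hθ) hμ,
    fractSupport_fractShift_ssubset hm₀ ?_, fractSupport_fractShift_ssubset hm₁ ?_⟩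
  · linarith [hmin₀ m (mem_fractSupport.2 hm), Int.self_sub_floor (y m)]
  · linarith [Int.le_ceil (y m)]
  · linarith [Int.floor_le (y m)]
  · linarith [hmin₁ m (mem_fractSupport.2 hm), Int.ceil_eq_add_one_sub_fract hm]
  · rw [← sub_eq_add_neg, Int.self_sub_fract, Int.fract_intCast]
  · rw [← add_sub_assoc, ← Int.ceil_eq_add_one_sub_fract (mem_fractSupport.1 hm₁),
      Int.fract_intCast]

end MonotoneInterPi

theorem image_eq_convexHull_of_subset_convexHull {κ ι : Type*}
    (φ : (κ → ℝ) →ₗ[ℝ] (ι → ℝ)) {C : Set (κ → ℝ)} (hC : Convex ℝ C)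
    (hCint : C ⊆ convexHull ℝ {y ∈ C | ∀ i, ∃ z : ℤ, y i = z})
    (hφ : ∀ y : κ → ℝ, (∀ i, ∃ z : ℤ, y i = z) → ∀ j, ∃ z : ℤ, φ y j = z) :
    φ '' C = convexHull ℝ {u ∈ φ '' C | ∀ j, ∃ z : ℤ, u j = z} := by
  refine (Set.image_mono hCint).trans ?_ |>.antisymm
    (convexHull_min (fun u hu => hu.1) (hC.linear_image φ))
  rw [LinearMap.image_convexHull]
  exact convexHull_mono fun _ ⟨y, ⟨hy, hyint⟩, hφy⟩ => ⟨⟨y, hy, hφy⟩, hφy ▸ hφ y hyint⟩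

section PrefixSums

variable {N : ℕ} (σ : Equiv.Perm (Fin N))

noncomputable def sumBelow (u : Fin N → ℝ) (m : ℕ) : ℝ := ∑ i with (σ i : ℕ) < m, u i

def diffAlong : (Fin (N + 1) → ℝ) →ₗ[ℝ] (Fin N → ℝ) where
  toFun y i := y (σ i).succ - y (σ i).castSucc
  map_add' y z := by ext i; simp only [Pi.add_apply]; ring
  map_smul' c y := by ext i; simp only [Pi.smul_apply, smul_eq_mul, RingHom.id_apply]; ring

lemma diffAlong_apply (y : Fin (N + 1) → ℝ) (i : Fin N) :
    diffAlong σ y i = y (σ i).succ - y (σ i).castSucc := rfl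

lemma sumBelow_zero (u : Fin N → ℝ) : sumBelow σ u 0 = 0 := by
  simp [sumBelow]

lemma sumBelow_succ (u : Fin N → ℝ) (m : Fin N) :
    sumBelow σ u (m + 1) = sumBelow σ u m + u (σ.symm m) := by
  have : univ.filter (fun i => (σ i : ℕ) < m + 1) =
      insert (σ.symm m) (univ.filter fun i => (σ i : ℕ) < m) := by
    ext i
    simp only [Finset.mem_filter, Finset.mem_univ, true_and, Finset.mem_insert,
      Equiv.eq_symm_apply, Fin.ext_iff]
    exact Nat.lt_add_one_iff_lt_or_eq.trans or_comm
  rw [sumBelow, this, sum_insert (by simp), add_comm]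
  rfl

lemma sumBelow_of_le (u : Fin N → ℝ) {m : ℕ} (hm : N ≤ m) : sumBelow σ u m = ∑ i, u i := by
  rw [sumBelow, filter_true_of_mem fun i _ => by omega]

lemma sumBelow_mono {u : Fin N → ℝ} (hu : ∀ i, 0 ≤ u i) : Monotone (sumBelow σ u) :=
  fun _ _ hab => sum_le_sum_of_subset_of_nonneg (monotone_filter_right _ fun _ h => by omega)
    fun i _ _ => hu i

lemma diffAlong_sumBelow (u : Fin N → ℝ) : diffAlong σ (fun m => sumBelow σ u m) = u := by
  ext i
  simp [diffAlong_apply, sumBelow_succ]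

lemma sumBelow_diffAlong (y : Fin (N + 1) → ℝ) (m : Fin (N + 1)) :
    sumBelow σ (diffAlong σ y) m = y m - y 0 := by
  induction m using Fin.induction with
  | zero => simp [sumBelow_zero]
  | succ m ih =>
    rw [Fin.val_succ, sumBelow_succ, Fin.val_castSucc] at *
    rw [ih, diffAlong_apply, Equiv.apply_symm_apply]
    ring

lemma diffAlong_nonneg {y : Fin (N + 1) → ℝ} (hy : Monotone y) (i : Fin N) :
    0 ≤ diffAlong σ y i :=
  sub_nonneg.2 (hy (Fin.castSucc_le_succ _))

lemma diffAlong_integral {y : Fin (N + 1) → ℝ} (hy : ∀ m, ∃ z : ℤ, y m = z) (i : Fin N) :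
    ∃ z : ℤ, diffAlong σ y i = z := by
  obtain ⟨a, ha⟩ := hy (σ i).succ
  obtain ⟨b, hb⟩ := hy (σ i).castSucc
  exact ⟨a - b, by rw [diffAlong_apply, ha, hb, Int.cast_sub]⟩

end PrefixSums

lemma Icc_floor_ceil_subset_Icc {a b : ℤ} {x : ℝ} (hx : x ∈ Icc (a : ℝ) b) :
    Icc (⌊x⌋ : ℝ) ⌈x⌉ ⊆ Icc (a : ℝ) b :=
  Icc_subset_Icc (by exact_mod_cast Int.le_floor.2 hx.1) (by exact_mod_cast Int.ceil_le.2 hx.2)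

section Hook

variable (k l : ℕ)

def hookReflect (i : Fin (k + l)) : Fin (k + l) :=
  if h : (i : ℕ) < k then i else ⟨2 * k + l - 1 - i, by omega⟩

lemma val_hookReflect (i : Fin (k + l)) :
    (hookReflect k l i : ℕ) = if (i : ℕ) < k then (i : ℕ) else 2 * k + l - 1 - i := by
  unfold hookReflect; split_ifs <;> rfl

lemma hookReflect_involutive : Function.Involutive (hookReflect k l) := fun i =>
  Fin.ext <| by simp only [val_hookReflect]; split_ifs <;> omega

def hookOrder : Equiv.Perm (Fin (k + l)) := (hookReflect_involutive k l).toPerm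

lemma sum_filter_lt_eq_sumBelow_hookOrder (u : Fin (k + l) → ℝ) {r : ℕ} (hr : r ≤ k) :
    ∑ i ∈ univ.filter (fun i : Fin (k + l) => (i : ℕ) < r), u i = sumBelow (hookOrder k l) u r := by
  refine sum_congr (filter_congr fun i _ => ?_) fun _ _ => rfl
  simp only [hookOrder, Function.Involutive.coe_toPerm, val_hookReflect]
  split_ifs <;> omega

lemma sum_filter_block_eq_sub_sumBelow_hookOrder (u : Fin (k + l) → ℝ) {s : ℕ} (hs : s ≤ l) :
    ∑ i ∈ univ.filter (fun i : Fin (k + l) => k ≤ (i : ℕ) ∧ (i : ℕ) < k + s), u i =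
      ∑ i, u i - sumBelow (hookOrder k l) u (k + l - s) := by
  rw [eq_sub_iff_add_eq, sumBelow, add_comm,
    ← sum_filter_add_sum_filter_not univ fun i => (hookOrder k l i : ℕ) < k + l - s]
  refine congrArg _ (sum_congr (filter_congr fun i _ => ?_) fun _ _ => rfl)
  simp only [hookOrder, Function.Involutive.coe_toPerm, val_hookReflect]
  split_ifs <;> omega

def hookPolyhedron (n : ℤ) (L C : ℕ → ℤ) : Set (Fin (k + l) → ℝ) := {u |
  (∀ r, 1 ≤ r → r ≤ k → ∑ i ∈ univ.filter (fun i : Fin (k + l) => (i : ℕ) < r), u i ≤ L r) ∧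
  (∀ s, 1 ≤ s → s ≤ l →
    ∑ i ∈ univ.filter (fun i : Fin (k + l) => k ≤ (i : ℕ) ∧ (i : ℕ) < k + s), u i ≤ C s) ∧
  ∑ i, u i = n ∧ ∀ i, 0 ≤ u i}

-- `0` and `n` are the bounds `y 0 = 0 ≤ y m ≤ y (k + l) = n` forced anyway by monotonicity.
def hookLower (n : ℤ) (C : ℕ → ℤ) (m : ℕ) : ℤ :=
  if m < k then 0 else if m < k + l then n - C (k + l - m) else n

def hookUpper (n : ℤ) (L : ℕ → ℤ) (m : ℕ) : ℤ :=
  if m = 0 then 0 else if m ≤ k then L m else n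

def hookChains (n : ℤ) (L C : ℕ → ℤ) : Set (Fin (k + l + 1) → ℝ) :=
  {y | Monotone y} ∩ univ.pi fun m => Icc (hookLower k l n C m : ℝ) (hookUpper k n L m)

variable {k l} {n : ℤ} {L C : ℕ → ℤ}

lemma sumBelow_mem_hookChains {u : Fin (k + l) → ℝ} (hu : u ∈ hookPolyhedron k l n L C) :
    (fun m : Fin (k + l + 1) => sumBelow (hookOrder k l) u m) ∈ hookChains k l n L C := by
  obtain ⟨hrow, hcol, htot, hnonneg⟩ := hu
  have hmono := sumBelow_mono (hookOrder k l) hnonneg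
  have htot' : sumBelow (hookOrder k l) u (k + l) = n := by rw [sumBelow_of_le _ _ le_rfl, htot]
  refine ⟨fun a b hab => hmono hab, fun m _ => ⟨?_, ?_⟩⟩ <;>
    simp only [hookLower, hookUpper] <;> split_ifs with h₁ h₂
  · exact_mod_cast sum_nonneg fun i _ => hnonneg i
  · have := hcol (k + l - m) (by omega) (by omega)
    rw [sum_filter_block_eq_sub_sumBelow_hookOrder k l u (by omega), Nat.sub_sub_self (by omega),
      htot] at this
    push_cast
    linarith
  · rw [show (m : ℕ) = k + l by omega, htot']
  · simp [h₁, sumBelow_zero]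
  · rw [← sum_filter_lt_eq_sumBelow_hookOrder k l u h₂]
    exact hrow m (by omega) h₂
  · exact htot' ▸ hmono (by omega : (m : ℕ) ≤ k + l)

lemma diffAlong_mem_hookPolyhedron (hk : 1 ≤ k) (hl : 1 ≤ l) {y : Fin (k + l + 1) → ℝ}
    (hy : y ∈ hookChains k l n L C) : diffAlong (hookOrder k l) y ∈ hookPolyhedron k l n L C := by
  obtain ⟨hmono, hbox⟩ := hy
  have hbounds (m : Fin (k + l + 1)) := hbox m (mem_univ m)
  have hy₀ : y 0 = 0 := by simpa [hookLower, hookUpper, show 0 < k from hk] using hbounds 0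
  have hsum (m : ℕ) (hm : m < k + l + 1) :
      sumBelow (hookOrder k l) (diffAlong (hookOrder k l) y) m = y ⟨m, hm⟩ := by
    simpa [hy₀] using sumBelow_diffAlong (hookOrder k l) y ⟨m, hm⟩
  have htot : ∑ i, diffAlong (hookOrder k l) y i = n := by
    have h := hbounds (Fin.last _)
    simp only [hookLower, hookUpper, Fin.val_last] at h
    rw [if_neg (by omega), if_neg (by omega), if_neg (by omega), if_neg (by omega)] at h
    rw [← sumBelow_of_le _ _ le_rfl, hsum _ (by omega)]
    exact le_antisymm h.2 h.1
  refine ⟨fun r hr₁ hr₂ => ?_, fun s hs₁ hs₂ => ?_, htot, diffAlong_nonneg _ hmono⟩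
  · have h := (hbounds ⟨r, by omega⟩).2
    simp only [hookUpper, if_neg (by omega : r ≠ 0), if_pos hr₂] at h
    rwa [sum_filter_lt_eq_sumBelow_hookOrder k l _ hr₂, hsum _ (by omega)]
  · have h := (hbounds ⟨k + l - s, by omega⟩).1
    simp only [hookLower] at h
    rw [if_neg (by omega), if_pos (by omega), Nat.sub_sub_self (by omega)] at h
    rw [sum_filter_block_eq_sub_sumBelow_hookOrder k l _ hs₂, htot, hsum _ (by omega)]
    push_cast at h
    linarith

lemma hookPolyhedron_eq_image (hk : 1 ≤ k) (hl : 1 ≤ l) :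
    hookPolyhedron k l n L C = diffAlong (hookOrder k l) '' hookChains k l n L C :=
  Set.Subset.antisymm
    (fun u hu => ⟨_, sumBelow_mem_hookChains hu, diffAlong_sumBelow _ u⟩)
    (Set.image_subset_iff.2 fun _ hy => diffAlong_mem_hookPolyhedron hk hl hy)

theorem hookPolyhedron_eq_convexHull (hk : 1 ≤ k) (hl : 1 ≤ l) :
    hookPolyhedron k l n L C =
      convexHull ℝ {u ∈ hookPolyhedron k l n L C | ∀ i, ∃ z : ℤ, u i = z} := by
  rw [hookPolyhedron_eq_image hk hl]
  exact image_eq_convexHull_of_subset_convexHull _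
    (convex_setOf_monotone.inter (convex_pi fun _ _ => convex_Icc _ _))
    (monotone_inter_pi_subset_convexHull fun _ _ => Icc_floor_ceil_subset_Icc)
    fun _ hy => diffAlong_integral _ hy

end Hook

theorem hook_polyhedron_integral_general (k l : ℕ) (hk : 1 ≤ k) (hl : 1 ≤ l)
    (lam : YoungDiagram) :
    let H : Set (Fin (k + l) → ℝ) := {u |
        (∀ r, 1 ≤ r → r ≤ k →
          ∑ i ∈ Finset.univ.filter (fun i : Fin (k + l) => (i : ℕ) < r), u i ≤
            (∑ i ∈ Finset.range r, lam.rowLen i : ℕ)) ∧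
        (∀ s, 1 ≤ s → s ≤ l →
          ∑ i ∈ Finset.univ.filter
              (fun i : Fin (k + l) => k ≤ (i : ℕ) ∧ (i : ℕ) < k + s), u i ≤
            (∑ j ∈ Finset.range s, lam.colLen j : ℕ)) ∧
        (∑ i, u i = lam.card) ∧ (∀ i, 0 ≤ u i)}
    H = convexHull ℝ {u ∈ H | ∀ i, ∃ z : ℤ, u i = z} := by
  intro H
  have hH : H = hookPolyhedron k l lam.card
      (fun r => (∑ i ∈ Finset.range r, lam.rowLen i : ℕ))
      (fun s => (∑ j ∈ Finset.range s, lam.colLen j : ℕ)) := by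
    simp only [H, hookPolyhedron, Int.cast_natCast]
  rw [hH]
  exact hookPolyhedron_eq_convexHull hk hl

/-- **Integrality of the hook polyhedron.** For a partition `λ` in the `(k,ℓ)`-hook, the
polyhedron `H = {u ∈ ℝ^{k+ℓ} : Σ_{i≤r} u_i ≤ L_r (1 ≤ r ≤ k), Σ_{j≤s} u_{k+j} ≤ C_s
(1 ≤ s ≤ ℓ), Σ_i u_i = |λ|, u ≥ 0}` is integral: it equals the convex hull of its
integer points. -/
theorem hook_polyhedron_integral (k l : ℕ) (hk : 1 ≤ k) (hl : 1 ≤ l)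
    (lam : YoungDiagram) (hhook : lam.rowLen k ≤ l) :
    let H : Set (Fin (k + l) → ℝ) := {u |
        (∀ r, 1 ≤ r → r ≤ k →
          ∑ i ∈ Finset.univ.filter (fun i : Fin (k + l) => (i : ℕ) < r), u i ≤
            (∑ i ∈ Finset.range r, lam.rowLen i : ℕ)) ∧
        (∀ s, 1 ≤ s → s ≤ l →
          ∑ i ∈ Finset.univ.filter
              (fun i : Fin (k + l) => k ≤ (i : ℕ) ∧ (i : ℕ) < k + s), u i ≤
            (∑ j ∈ Finset.range s, lam.colLen j : ℕ)) ∧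
        (∑ i, u i = lam.card) ∧ (∀ i, 0 ≤ u i)}
    H = convexHull ℝ {u ∈ H | ∀ i, ∃ z : ℤ, u i = z} :=
  hook_polyhedron_integral_general k l hk hl lam
end

section
/- For a totally unimodular integer matrix M ∈ Z^{p×q} and any integral vector b ∈ Z^p, every vertex of the polyhedron {x ∈ R^q : Mx ≤ b} is an integer point. -/
/-!
If some `d ≠ 0` were orthogonal to every row of `M` that is tight at the vertex `x`, then
`x + ε d` and `x - ε d` would both lie in the polyhedron for small `ε > 0`, and `x` would be their
midpoint. So the tight rows span `ℝ^q`, and `q` of them form a nonsingular square submatrix `B`.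
Total unimodularity makes `det B = ±1`, hence `B⁻¹` is an integer matrix, and
`x = B⁻¹ b_B` is integral.
-/

open Matrix

section Polyhedron

variable {𝕜 m n : Type*} [Field 𝕜] [LinearOrder 𝕜] [IsStrictOrderedRing 𝕜]

lemma exists_pos_forall_le_of_forall_pos {ι : Type*} [Finite ι] {f : ι → 𝕜}
    (hf : ∀ i, 0 < f i) : ∃ ε > 0, ∀ i, ε ≤ f i := by
  rcases isEmpty_or_nonempty ι with hι | hι
  · exact ⟨1, one_pos, isEmptyElim⟩
  · obtain ⟨i₀, hi₀⟩ := Finite.exists_min f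
    exact ⟨f i₀, hf i₀, hi₀⟩

lemma exists_pos_forall_abs_le_add_mul_le {a c β : 𝕜} (ha : a ≤ β) (hc : c ≠ 0 → a < β) :
    ∃ ε > 0, ∀ s, |s| ≤ ε → a + s * c ≤ β := by
  rcases eq_or_ne c 0 with rfl | hc0
  · exact ⟨1, one_pos, fun s _ => by simpa using ha⟩
  have hc_pos : 0 < |c| := abs_pos.mpr hc0
  refine ⟨(β - a) / |c|, div_pos (sub_pos.mpr (hc hc0)) hc_pos, fun s hs => ?_⟩
  have : s * c ≤ β - a :=
    calc s * c ≤ |s| * |c| := by rw [← abs_mul]; exact le_abs_self _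
      _ ≤ (β - a) / |c| * |c| := by gcongr
      _ = β - a := div_mul_cancel₀ _ hc_pos.ne'
  linarith

variable [Fintype m] [Fintype n]

theorem mulVec_submatrix_tight_injective_of_mem_extremePoints {A : Matrix m n 𝕜} {b : m → 𝕜}
    {x : n → 𝕜} (hx : x ∈ {u | A *ᵥ u ≤ b}.extremePoints 𝕜) :
    Function.Injective (A.submatrix (Subtype.val : {i // (A *ᵥ x) i = b i} → m) id).mulVec := by
  intro d₁ d₂ hd₁₂
  set d := d₁ - d₂
  have hd : ∀ i, (A *ᵥ x) i = b i → (A *ᵥ d) i = 0 := fun i hi => by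
    rw [mulVec_sub, Pi.sub_apply, sub_eq_zero]
    exact congrFun hd₁₂ ⟨i, hi⟩
  have hrow : ∀ i, ∃ ε > 0, ∀ s, |s| ≤ ε → (A *ᵥ x) i + s * (A *ᵥ d) i ≤ b i := fun i =>
    exists_pos_forall_abs_le_add_mul_le (hx.1 i) fun hi =>
      (hx.1 i).lt_of_ne fun h => hi (hd i h)
  choose εs hεs_pos hεs using hrow
  obtain ⟨ε, hε_pos, hε_le⟩ := exists_pos_forall_le_of_forall_pos hεs_pos
  have hmem : ∀ s, |s| ≤ ε → x + s • d ∈ {u | A *ᵥ u ≤ b} := fun s hs i => by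
    simpa [mulVec_add, mulVec_smul] using hεs i s (hs.trans (hε_le i))
  have hseg : x ∈ openSegment 𝕜 (x + ε • d) (x + (-ε) • d) :=
    ⟨1 / 2, 1 / 2, by norm_num, by norm_num, by norm_num, by module⟩
  have hεd : x + ε • d = x := hx.2 (hmem ε (abs_of_pos hε_pos).le)
    (hmem (-ε) (by rw [abs_neg, abs_of_pos hε_pos])) hseg
  rw [add_eq_left, smul_eq_zero] at hεd
  exact sub_eq_zero.mp (hεd.resolve_left hε_pos.ne')

end Polyhedron

theorem Matrix.exists_isUnit_submatrix_of_mulVec_injective {K m n : Type*} [Field K] [Finite m]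
    [Fintype n] [DecidableEq n] {A : Matrix m n K} (hA : Function.Injective A.mulVec) :
    ∃ g : n → m, IsUnit (A.submatrix g id) := by
  have hspan : Submodule.span K (Set.range A.row) = ⊤ := by
    apply Submodule.eq_top_of_finrank_eq
    rw [← rank_eq_finrank_span_row, rank, LinearMap.finrank_range_of_inj hA]
  obtain ⟨κ, a, -, hspan_a, hli⟩ := exists_linearIndependent' K A.row
  have : Fintype κ := @Fintype.ofFinite κ hli.finite
  have hcard : Fintype.card n = Fintype.card κ := by
    rw [linearIndependent_iff_card_eq_finrank_span.mp hli, Set.finrank, hspan_a, hspan,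
      finrank_top, Module.finrank_fintype_fun_eq_card]
  exact ⟨a ∘ Fintype.equivOfCardEq hcard, linearIndependent_rows_iff_isUnit.mp
    (hli.comp _ (Fintype.equivOfCardEq hcard).injective)⟩

theorem Matrix.IsTotallyUnimodular.isUnit_det_submatrix {R m n ι : Type*} [CommRing R]
    [Fintype ι] [DecidableEq ι] {A : Matrix m n R} (hA : A.IsTotallyUnimodular) (f : ι → m)
    (g : ι → n) (h : (A.submatrix f g).det ≠ 0) : IsUnit (A.submatrix f g).det := by
  obtain ⟨s, hs⟩ := (isTotallyUnimodular_iff_fintype A).mp hA ι f g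
  rcases s with _ | _ | _ <;> simp [← hs] at h ⊢

theorem Matrix.eq_comp_mulVec_of_map_mulVec_eq {R S n : Type*} [CommRing R] [CommRing S]
    [Fintype n] [DecidableEq n] (f : R →+* S) {B : Matrix n n R} (hB : IsUnit B.det)
    {x : n → S} {c : n → R} (h : B.map f *ᵥ x = f ∘ c) : x = f ∘ (B⁻¹ *ᵥ c) := by
  have hinv : B⁻¹.map f * B.map f = 1 := by
    rw [← Matrix.map_mul, nonsing_inv_mul B hB, Matrix.map_one f f.map_zero f.map_one]
  funext i
  calc x i = ((B⁻¹.map f * B.map f) *ᵥ x) i := by rw [hinv, one_mulVec]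
    _ = f ((B⁻¹ *ᵥ c) i) := by rw [← mulVec_mulVec, h, RingHom.map_mulVec]

/-- **Hoffman–Kruskal (one direction).** For a totally unimodular integer matrix
`M ∈ ℤ^{p×q}` and any integral vector `b ∈ ℤ^p`, every vertex (extreme point) of the
polyhedron `{x ∈ ℝ^q : M x ≤ b}` is an integer point. -/
theorem vertex_integral_of_totallyUnimodular (p q : ℕ) (M : Matrix (Fin p) (Fin q) ℤ)
    (hM : M.IsTotallyUnimodular) (b : Fin p → ℤ) (x : Fin q → ℝ)
    (hx : x ∈ Set.extremePoints ℝ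
      {u : Fin q → ℝ | ∀ i, ∑ j, (M i j : ℝ) * u j ≤ (b i : ℝ)}) :
    ∀ j, ∃ z : ℤ, x j = z := by
  obtain ⟨g, hg⟩ := exists_isUnit_submatrix_of_mulVec_injective
    (mulVec_submatrix_tight_injective_of_mem_extremePoints (A := M.map (Int.castRingHom ℝ))
      (b := Int.castRingHom ℝ ∘ b) hx)
  set B := M.submatrix (Subtype.val ∘ g) id
  have hdet : B.det ≠ 0 := fun h0 => by
    rw [isUnit_iff_isUnit_det, submatrix_submatrix, Function.comp_id, submatrix_map,
      ← RingHom.mapMatrix_apply, ← RingHom.map_det, h0, map_zero] at hg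
    exact not_isUnit_zero hg
  have hsys : B.map (Int.castRingHom ℝ) *ᵥ x = Int.castRingHom ℝ ∘ (b ∘ Subtype.val ∘ g) :=
    funext fun k => (g k).2
  have hx_eq := eq_comp_mulVec_of_map_mulVec_eq _ (hM.isUnit_det_submatrix _ _ hdet) hsys
  exact fun j => ⟨_, congrFun hx_eq j⟩
end
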